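/- arXiv:2601.20528 — 2 statements merged into one kernel-verified Lean document; each statement's English description precedes it below -/
import Mathlib

section
/- Let α > d/2, σ > 0, and define v_ℓ = C_ℓ σ²/(n C_ℓ + σ²) with C_ℓ = (1 + ℓ²)^{-α}. Then there is a constant c = c(d, α, σ) such that for L_n = ⌈n^{1/(2α+d)}⌉, Σ_{ℓ=0}^{L_n} (ℓ+1)^{d-1} v_ℓ ≤ c n^{-2α/(2α+d)} for all n ≥ 1. -/
/-!
Each posterior variance is at most the noise level `σ²/n`, and the multiplicity weight
`(ℓ+1)^{d-1}` is at most `(L+1)^{d-1}` on `ℓ ≤ L`, so the sum is at most `(L+1)^d σ²/n`.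
With `L = ⌈n^{1/(2α+d)}⌉` this is `≲ n^{d/(2α+d)}/n = n^{-2α/(2α+d)}`.
-/

open Finset

lemma mul_div_mul_add_le_div {C τ n : ℝ} (hC : 0 < C) (hτ : 0 ≤ τ) (hn : 0 < n) :
    C * τ / (n * C + τ) ≤ τ / n := by
  rw [div_le_div_iff₀ (by positivity) hn]
  nlinarith [sq_nonneg τ]

lemma sum_range_succ_pow_mul_le {f : ℕ → ℝ} {B : ℝ} {N d : ℕ} (hd : 1 ≤ d) (hB : 0 ≤ B)
    (hf : ∀ ℓ < N, f ℓ ≤ B) :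
    ∑ ℓ ∈ range N, ((ℓ : ℝ) + 1) ^ (d - 1) * f ℓ ≤ (N : ℝ) ^ d * B := by
  calc ∑ ℓ ∈ range N, ((ℓ : ℝ) + 1) ^ (d - 1) * f ℓ
      ≤ ∑ _ℓ ∈ range N, (N : ℝ) ^ (d - 1) * B := by
        refine sum_le_sum fun ℓ hℓ => ?_
        have hℓN : (ℓ : ℝ) + 1 ≤ N := by exact_mod_cast mem_range.mp hℓ
        calc ((ℓ : ℝ) + 1) ^ (d - 1) * f ℓ ≤ ((ℓ : ℝ) + 1) ^ (d - 1) * B :=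
              mul_le_mul_of_nonneg_left (hf ℓ (mem_range.mp hℓ)) (by positivity)
          _ ≤ (N : ℝ) ^ (d - 1) * B := by gcongr
    _ = (N : ℝ) ^ d * B := by
        rw [sum_const, card_range, nsmul_eq_mul, ← mul_assoc, ← pow_succ',
          Nat.sub_add_cancel hd]

lemma natCeil_add_one_le_three_mul {x : ℝ} (hx : 1 ≤ x) : (⌈x⌉₊ : ℝ) + 1 ≤ 3 * x := by
  linarith [Nat.ceil_lt_add_one (zero_le_one.trans hx)]

lemma rpow_one_div_pow_div_self {x α : ℝ} {d : ℕ} (hx : 0 < x) (hs : 2 * α + d ≠ 0) :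
    (x ^ (1 / (2 * α + d))) ^ d / x = x ^ (-(2 * α) / (2 * α + d)) := by
  have hexp : -(2 * α) / (2 * α + d) = (1 / (2 * α + d)) * d - 1 := by
    field_simp
    ring
  rw [hexp, Real.rpow_sub hx, Real.rpow_one, Real.rpow_mul hx.le, Real.rpow_natCast]

/-- Posterior variance bound in the truncated spherical Gaussian sequence
model: with `C_ℓ = (1+ℓ²)^{-α}` and posterior variances
`v_ℓ = C_ℓσ²/(nC_ℓ+σ²)`, for the truncation level `L_n = ⌈n^{1/(2α+d)}⌉`,
`Σ_{ℓ=0}^{L_n} (ℓ+1)^{d-1} v_ℓ ≤ c n^{-2α/(2α+d)}` for all `n ≥ 1`. -/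
theorem posterior_variance_bound (d : ℕ) (hd : 1 ≤ d) (α σ : ℝ)
    (hα : (d : ℝ) / 2 < α) (hσ : 0 < σ) :
    ∃ c : ℝ, 0 < c ∧ ∀ n : ℕ, 1 ≤ n →
      (∑ ℓ ∈ Finset.range (⌈(n : ℝ) ^ (1 / (2 * α + d))⌉₊ + 1),
          ((ℓ : ℝ) + 1) ^ (d - 1) *
            ((1 + (ℓ : ℝ) ^ 2) ^ (-α) * σ ^ 2 /
              ((n : ℝ) * (1 + (ℓ : ℝ) ^ 2) ^ (-α) + σ ^ 2)))
        ≤ c * (n : ℝ) ^ (-(2 * α) / (2 * α + d)) := by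
  have hs : 0 < 2 * α + d := by linarith [(Nat.cast_nonneg d : (0 : ℝ) ≤ d)]
  refine ⟨3 ^ d * σ ^ 2, by positivity, fun n hn => ?_⟩
  have hn1 : (1 : ℝ) ≤ n := by exact_mod_cast hn
  have hn0 : (0 : ℝ) < n := one_pos.trans_le hn1
  set x := (n : ℝ) ^ (1 / (2 * α + d))
  have hx : 1 ≤ x := Real.one_le_rpow hn1 (by positivity)
  calc _ ≤ ((⌈x⌉₊ + 1 : ℕ) : ℝ) ^ d * (σ ^ 2 / n) :=
        sum_range_succ_pow_mul_le hd (by positivity) fun ℓ _ =>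
          mul_div_mul_add_le_div (by positivity) (sq_nonneg σ) hn0
    _ ≤ (3 * x) ^ d * (σ ^ 2 / n) := by
        gcongr
        exact_mod_cast natCeil_add_one_le_three_mul hx
    _ = 3 ^ d * σ ^ 2 * (x ^ d / n) := by ring
    _ = 3 ^ d * σ ^ 2 * (n : ℝ) ^ (-(2 * α) / (2 * α + d)) := by
        rw [rpow_one_div_pow_div_self hn0 hs.ne']
end

section
/- Let α ≥ β > 0, d ≥ 1. With C_ℓ = (1+ℓ²)^{-α} and any nonnegative sequence (b_ℓ) satisfying Σ_ℓ (1+ℓ²)^β b_ℓ ≤ 1, the shrinkage bias satisfies Σ_{ℓ=0}^{L} (σ²/(n C_ℓ + σ²))² b_ℓ ≤ (σ⁴/n²)(1+L²)^{2α-β} for every L ≥ 0 and n ≥ 1. -/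
/-- Shrinkage bias bound: with `C_ℓ = (1+ℓ²)^{-α}`, `α ≥ β > 0`, and a
nonnegative sequence `(b_ℓ)` with `Σ_ℓ (1+ℓ²)^β b_ℓ ≤ 1`, the shrinkage bias
satisfies `Σ_{ℓ=0}^{L} (σ²/(n C_ℓ + σ²))² b_ℓ ≤ (σ⁴/n²)(1+L²)^{2α-β}`
for every `L ≥ 0` and `n ≥ 1`. -/
theorem shrinkage_bias_bound (α β : ℝ) (hβ : 0 < β) (hβα : β ≤ α)
    (d : ℕ) (hd : 1 ≤ d) (σ : ℝ) (hσ : 0 < σ)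
    (b : ℕ → ℝ) (hb : ∀ ℓ, 0 ≤ b ℓ)
    (hsum : Summable fun ℓ : ℕ => (1 + (ℓ : ℝ) ^ 2) ^ β * b ℓ)
    (hbound : (∑' ℓ : ℕ, (1 + (ℓ : ℝ) ^ 2) ^ β * b ℓ) ≤ 1) :
    ∀ (L : ℕ) (n : ℕ), 1 ≤ n →
      (∑ ℓ ∈ Finset.range (L + 1),
          (σ ^ 2 / ((n : ℝ) * (1 + (ℓ : ℝ) ^ 2) ^ (-α) + σ ^ 2)) ^ 2 * b ℓ)
        ≤ (σ ^ 4 / (n : ℝ) ^ 2) * (1 + (L : ℝ) ^ 2) ^ (2 * α - β) := by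
  intro L n hn
  have hn0 : (0:ℝ) < n := by exact_mod_cast hn
  set X : ℝ := 1 + (L:ℝ)^2 with hXdef
  have hX0 : (0:ℝ) < X := by positivity
  have hC : (0:ℝ) ≤ (σ ^ 4 / (n:ℝ)^2) * X ^ (2*α - β) := by positivity
  have key : ∀ ℓ ∈ Finset.range (L+1),
      (σ ^ 2 / ((n : ℝ) * (1 + (ℓ : ℝ) ^ 2) ^ (-α) + σ ^ 2)) ^ 2 * b ℓ
        ≤ (σ ^ 4 / (n:ℝ)^2) * X ^ (2*α - β) * ((1 + (ℓ:ℝ)^2)^β * b ℓ) := by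
    intro ℓ hℓ
    set x : ℝ := 1 + (ℓ:ℝ)^2 with hxdef
    have hx0 : (0:ℝ) < x := by positivity
    have hxa : (0:ℝ) < x ^ (-α) := Real.rpow_pos_of_pos hx0 _
    have hD : 0 < (n:ℝ) * x ^ (-α) + σ^2 := by positivity
    have hxX : x ≤ X := by
      have : (ℓ:ℝ) ≤ (L:ℝ) := by
        exact_mod_cast Nat.lt_succ_iff.mp (Finset.mem_range.mp hℓ)
      have := sq_le_sq' (by nlinarith [Nat.cast_nonneg (α := ℝ) ℓ]) this
      simp only [hxdef, hXdef]
      nlinarith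
    have h1 : σ^2 / ((n:ℝ) * x ^ (-α) + σ^2) ≤ σ^2 * x ^ α / n := by
      have hle : (n:ℝ) * x ^ (-α) ≤ (n:ℝ) * x ^ (-α) + σ^2 :=
        le_add_of_nonneg_right (by positivity)
      have := div_le_div_of_nonneg_left (by positivity : (0:ℝ) ≤ σ^2)
        (by positivity) hle
      calc σ^2 / ((n:ℝ) * x ^ (-α) + σ^2) ≤ σ^2 / ((n:ℝ) * x ^ (-α)) := this
        _ = σ^2 * x ^ α / n := by
            rw [Real.rpow_neg hx0.le]
            field_simp
    have h2 : (σ^2 / ((n:ℝ) * x ^ (-α) + σ^2))^2 ≤ (σ^2 * x ^ α / n)^2 := by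
      apply pow_le_pow_left₀ (by positivity) h1
    have h3 : (σ^2 * x ^ α / n)^2 = σ^4 / (n:ℝ)^2 * (x ^ (2*α - β) * x ^ β) := by
      have e1 : x ^ (2*α - β) * x ^ β = x ^ (α * 2) := by
        rw [← Real.rpow_add hx0]; ring_nf
      have e2 : (x ^ α)^2 = x ^ (α * 2) := by
        rw [← Real.rpow_natCast (x ^ α) 2, ← Real.rpow_mul hx0.le]; norm_num
      rw [e1, ← e2]; ring
    have h4 : x ^ (2*α - β) ≤ X ^ (2*α - β) :=
      Real.rpow_le_rpow hx0.le hxX (by linarith)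
    have hxb : (0:ℝ) ≤ x ^ β := (Real.rpow_pos_of_pos hx0 _).le
    calc (σ^2 / ((n:ℝ) * x ^ (-α) + σ^2))^2 * b ℓ
        ≤ (σ^2 * x ^ α / n)^2 * b ℓ := mul_le_mul_of_nonneg_right h2 (hb ℓ)
      _ = σ^4 / (n:ℝ)^2 * (x ^ (2*α - β) * x ^ β) * b ℓ := by rw [h3]
      _ ≤ σ^4 / (n:ℝ)^2 * (X ^ (2*α - β) * x ^ β) * b ℓ := by
          apply mul_le_mul_of_nonneg_right _ (hb ℓ)
          apply mul_le_mul_of_nonneg_left _ (by positivity)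
          exact mul_le_mul_of_nonneg_right h4 hxb
      _ = (σ^4 / (n:ℝ)^2) * X ^ (2*α - β) * (x ^ β * b ℓ) := by ring
  calc (∑ ℓ ∈ Finset.range (L + 1),
          (σ ^ 2 / ((n : ℝ) * (1 + (ℓ : ℝ) ^ 2) ^ (-α) + σ ^ 2)) ^ 2 * b ℓ)
      ≤ ∑ ℓ ∈ Finset.range (L + 1),
          (σ ^ 4 / (n:ℝ)^2) * X ^ (2*α - β) * ((1 + (ℓ:ℝ)^2)^β * b ℓ) :=
        Finset.sum_le_sum key
    _ = (σ ^ 4 / (n:ℝ)^2) * X ^ (2*α - β) *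
          ∑ ℓ ∈ Finset.range (L + 1), (1 + (ℓ:ℝ)^2)^β * b ℓ := by
        rw [Finset.mul_sum]
    _ ≤ (σ ^ 4 / (n:ℝ)^2) * X ^ (2*α - β) * 1 := by
        apply mul_le_mul_of_nonneg_left _ hC
        calc (∑ ℓ ∈ Finset.range (L + 1), (1 + (ℓ:ℝ)^2)^β * b ℓ)
            ≤ ∑' ℓ : ℕ, (1 + (ℓ:ℝ)^2)^β * b ℓ := by
              apply Summable.sum_le_tsum _ _ hsum
              intro i _
              exact mul_nonneg (by positivity) (hb i)
          _ ≤ 1 := hbound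
    _ = (σ ^ 4 / (n:ℝ)^2) * X ^ (2*α - β) := by ring
end
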